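/- Let β ≥ 1, α < β + 1 with α ≠ 1, and λ ≠ 0. For x > 0, the function G(x) = (1/λ)·x^{1−α}/(1−α) + x^{β−α+1}/(β−α+1) · ∑_{n=0}^∞ [ ((1)_n (e)_n) / ((2)_n (e+1)_n) ] (λx^β)ⁿ/n!, where e = −α/β + 1/β + 1, satisfies G'(x) = e^{λx^β}/(λx^α). -/

import Mathlib

/-!
Since `(1)_n / (2)_n = 1 / (n + 1)` and `(e)_n / (e + 1)_n = e / (e + n)`, and `e β = β - α + 1`,
the hypergeometric part of `G` is the series `∑ λⁿ / (n + 1)! · y^(γ + nβ) / (γ + nβ)` with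
`γ = β - α + 1 > 0`. Differentiating termwise (the terms are dominated locally uniformly by an
exponential series) gives `∑ λⁿ / (n + 1)! · x^(γ + nβ - 1) = x^(-α) (exp (λ x^β) - 1) / λ`, and the
first summand of `G` contributes the missing `x^(-α) / λ`.
-/

open Real Set Nat

noncomputable def poch (a : ℝ) (n : ℕ) : ℝ := ∏ i ∈ Finset.range n, (a + (i : ℝ))

lemma poch_succ (a : ℝ) (n : ℕ) : poch a (n + 1) = poch a n * (a + n) :=
  Finset.prod_range_succ _ n

lemma poch_one (n : ℕ) : poch 1 n = n ! := by
  induction n with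
  | zero => simp [poch]
  | succ n ih => rw [poch_succ, ih]; push_cast [Nat.factorial_succ]; ring

lemma poch_two (n : ℕ) : poch 2 n = (n + 1)! := by
  induction n with
  | zero => simp [poch]
  | succ n ih => rw [poch_succ, ih]; push_cast [Nat.factorial_succ]; ring

lemma poch_pos {a : ℝ} (ha : 0 < a) (n : ℕ) : 0 < poch a n := by
  induction n with
  | zero => simp [poch]
  | succ n ih => rw [poch_succ]; positivity

lemma poch_add_one_mul (a : ℝ) (n : ℕ) : poch (a + 1) n * a = poch a n * (a + n) := by
  induction n with
  | zero => simp [poch]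
  | succ n ih =>
    rw [poch_succ, poch_succ]
    push_cast
    linear_combination ih * (a + 1 + n)

lemma rpow_add_natCast_mul {y : ℝ} (hy : 0 < y) (p q : ℝ) (n : ℕ) :
    y ^ (p + n * q) = y ^ p * (y ^ q) ^ n := by
  rw [rpow_add hy, mul_comm (n : ℝ), rpow_mul_natCast hy.le]

lemma rpow_le_rpow_add_rpow {a b y : ℝ} (ha : 0 < a) (hay : a ≤ y) (hyb : y ≤ b) (p : ℝ) :
    y ^ p ≤ a ^ p + b ^ p := by
  have hy : 0 < y := ha.trans_le hay
  rcases le_total p 0 with hp | hp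
  · exact (rpow_le_rpow_of_nonpos ha hay hp).trans
      (le_add_of_nonneg_right (rpow_pos_of_pos (hy.trans_le hyb) p).le)
  · exact (rpow_le_rpow hy.le hyb hp).trans (le_add_of_nonneg_left (by positivity))

lemma hasDerivAt_rpow_div_self {p y : ℝ} (hp : p ≠ 0) (hy : 0 < y) :
    HasDerivAt (fun z : ℝ => z ^ p / p) (y ^ (p - 1)) y := by
  have h := (hasDerivAt_rpow_const (p := p) (Or.inl hy.ne')).div_const p
  rwa [mul_div_cancel_left₀ _ hp] at h

theorem hasDerivAt_tsum_rpow_div {a : ℕ → ℝ} {γ β x : ℝ}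
    (ha : ∀ R : ℝ, Summable fun n => |a n| * R ^ n) (hγ : 0 < γ) (hβ : 0 ≤ β) (hx : 0 < x) :
    HasDerivAt (fun y : ℝ => ∑' n : ℕ, a n * (y ^ (γ + n * β) / (γ + n * β)))
      (∑' n : ℕ, a n * x ^ (γ + n * β - 1)) x := by
  have hexp_pos : ∀ n : ℕ, 0 < γ + n * β := fun n =>
    add_pos_of_pos_of_nonneg hγ (mul_nonneg n.cast_nonneg hβ)
  set K := (x / 2) ^ (γ - 1) + (2 * x) ^ (γ - 1)
  set u : ℕ → ℝ := fun n => K * (|a n| * ((2 * x) ^ β) ^ n)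
  have hu : Summable u := (ha _).mul_left K
  have hxs : x ∈ Ioo (x / 2) (2 * x) := ⟨by linarith, by linarith⟩
  have hbound : ∀ (n : ℕ), ∀ y ∈ Ioo (x / 2) (2 * x), ‖a n * y ^ (γ + n * β - 1)‖ ≤ u n := by
    intro n y hy
    have hy0 : 0 < y := lt_trans (by positivity) hy.1
    rw [show γ + n * β - 1 = γ - 1 + n * β by ring, rpow_add_natCast_mul hy0, norm_mul,
      Real.norm_eq_abs, Real.norm_of_nonneg (by positivity : 0 ≤ y ^ (γ - 1) * (y ^ β) ^ n)]
    calc |a n| * (y ^ (γ - 1) * (y ^ β) ^ n)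
        ≤ |a n| * (K * ((2 * x) ^ β) ^ n) := by
          gcongr
          · exact rpow_le_rpow_add_rpow (by positivity) hy.1.le hy.2.le _
          · exact hy.2.le
      _ = u n := by ring
  refine hasDerivAt_tsum_of_isPreconnected hu isOpen_Ioo isPreconnected_Ioo
    (fun n y hy => (hasDerivAt_rpow_div_self (hexp_pos n).ne'
      (lt_trans (by positivity) hy.1)).const_mul (a n)) hbound hxs ?_ hxs
  refine Summable.of_norm_bounded (hu.mul_left (x / γ)) fun n => ?_
  have hterm : a n * (x ^ (γ + n * β) / (γ + n * β))
      = x / (γ + n * β) * (a n * x ^ (γ + n * β - 1)) := by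
    rw [show γ + n * β = γ + n * β - 1 + 1 by ring, rpow_add_one hx.ne']
    ring_nf
  rw [hterm, norm_mul, Real.norm_of_nonneg (div_pos hx (hexp_pos n)).le]
  exact mul_le_mul (div_le_div_of_nonneg_left hx.le hγ
    (le_add_of_nonneg_right (mul_nonneg n.cast_nonneg hβ)))
    (hbound n x hxs) (norm_nonneg _) (div_pos hx hγ).le

lemma summable_abs_pow_div_factorial_succ_mul_pow (c R : ℝ) :
    Summable fun n : ℕ => |c ^ n / (n + 1)!| * R ^ n := by
  refine Summable.of_norm_bounded (Real.summable_pow_div_factorial (|c| * |R|)) fun n => ?_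
  rw [norm_mul, norm_abs_eq_norm, norm_div, norm_pow, norm_pow, Real.norm_natCast, mul_pow,
    Real.norm_eq_abs, Real.norm_eq_abs, div_mul_eq_mul_div]
  gcongr
  exact Nat.le_succ n

lemma tsum_pow_succ_div_factorial_succ (t : ℝ) :
    ∑' n : ℕ, t ^ (n + 1) / (n + 1)! = exp t - 1 := by
  have h : exp t = ∑' n : ℕ, t ^ n / n ! := by
    rw [Real.exp_eq_exp_ℝ, NormedSpace.exp_eq_tsum_div]
  rw [(Real.summable_pow_div_factorial t).tsum_eq_zero_add] at h
  simp only [pow_zero, Nat.factorial_zero, Nat.cast_one, div_one] at h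
  linarith

lemma tsum_pow_div_factorial_succ_mul_rpow {c γ β x : ℝ} (hc : c ≠ 0) (hx : 0 < x) :
    ∑' n : ℕ, c ^ n / (n + 1)! * x ^ (γ + n * β - 1)
      = x ^ (γ - 1 - β) / c * (exp (c * x ^ β) - 1) := by
  have hterm : ∀ n : ℕ, c ^ n / (n + 1)! * x ^ (γ + n * β - 1)
      = x ^ (γ - 1 - β) / c * ((c * x ^ β) ^ (n + 1) / (n + 1)!) := by
    intro n
    rw [show γ + n * β - 1 = γ - 1 - β + ((n + 1 : ℕ) : ℝ) * β by push_cast; ring,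
      rpow_add_natCast_mul hx, mul_pow, pow_succ c]
    field_simp
  rw [tsum_congr hterm, tsum_mul_left, tsum_pow_succ_div_factorial_succ]

lemma rpow_div_mul_hypergeometric_term {β e l y : ℝ} (hβ : 0 < β) (he : 0 < e) (hy : 0 < y)
    (n : ℕ) :
    y ^ (e * β) / (e * β) *
        (poch 1 n * poch e n / (poch 2 n * poch (e + 1) n) * (l * y ^ β) ^ n / (n.factorial : ℝ))
      = l ^ n / (n + 1)! * (y ^ (e * β + n * β) / (e * β + n * β)) := by
  have hshift := poch_add_one_mul e n
  have := poch_pos he n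
  have := poch_pos (by linarith : 0 < e + 1) n
  rw [poch_one, poch_two, rpow_add_natCast_mul hy, mul_pow,
    show e * β + n * β = β * (e + n) by ring]
  field_simp
  linear_combination (-l ^ n) * hshift

theorem stmt_18 (β α l : ℝ) (hβ : 1 ≤ β) (hα : α < β + 1) (hα1 : α ≠ 1)
    (hl : l ≠ 0) (e : ℝ) (he : e = -α / β + 1 / β + 1) (x : ℝ) (hx : 0 < x) :
    HasDerivAt (fun y : ℝ => (1 / l) * y ^ (1 - α) / (1 - α) +
        y ^ (β - α + 1) / (β - α + 1) *
          ∑' n : ℕ, poch 1 n * poch e n / (poch 2 n * poch (e + 1) n) *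
            (l * y ^ β) ^ n / (n.factorial : ℝ))
      (Real.exp (l * x ^ β) / (l * x ^ α)) x := by
  have hβ0 : 0 < β := by linarith
  have heβ : e * β = β - α + 1 := by rw [he]; field_simp; ring
  have hγ : 0 < β - α + 1 := by linarith
  have he0 : 0 < e := (pos_iff_pos_of_mul_pos (heβ ▸ hγ)).2 hβ0
  have hpower : HasDerivAt (fun y : ℝ => (1 / l) * y ^ (1 - α) / (1 - α))
      ((1 / l) * x ^ (1 - α - 1)) x := by
    simpa only [mul_div_assoc] using
      (hasDerivAt_rpow_div_self (sub_ne_zero.mpr (Ne.symm hα1)) hx).const_mul (1 / l)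
  have hseries := hasDerivAt_tsum_rpow_div (summable_abs_pow_div_factorial_succ_mul_pow l)
    hγ hβ0.le hx
  rw [tsum_pow_div_factorial_succ_mul_rpow hl hx] at hseries
  refine ((hpower.add hseries).congr_deriv ?_).congr_of_eventuallyEq ?_
  · rw [show 1 - α - 1 = -α by ring, show β - α + 1 - 1 - β = -α by ring, rpow_neg hx.le]
    field_simp
    ring
  · filter_upwards [Ioi_mem_nhds hx] with y hy
    rw [← heβ, ← tsum_mul_left]
    exact congrArg _ (tsum_congr (rpow_div_mul_hypergeometric_term hβ0 he0 hy))
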